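/- arXiv:1505.02870 — 5 statements merged into one kernel-verified Lean document; each statement's English description precedes it below -/
import Mathlib

section
/- Let f(x) = x·log(x). Suppose 0 < p ≤ 1/2, 0 < p̃ ≤ p/2, and |f(p) - f(p̃)| > ε for some ε ∈ (0, 1/e). Then p ≥ exp(W₋₁(-ε)), where W₋₁ is the non-principal real branch of the Lambert W function on (-1/e, 0). -/
open Real Set

/-! Since `x ↦ x log x` is nonpositive on `[0, 1]`, `f(p̃) - f(p)` can only exceed `ε` if
`f(p) < -ε`, given that `f(p) ≤ f(p/2) ≤ f(p̃)` for `p ≤ 1/2`. On `[0, e⁻¹]`, where `f` is strictly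
decreasing, `-ε = f(exp w)`, so `f(p) < f(exp w)` forces `exp w ≤ p`. -/

namespace Real

lemma mul_log_le_mul_log_half {p : ℝ} (hp₀ : 0 ≤ p) (hp : p ≤ 1 / 2) :
    p * log p ≤ p / 2 * log (p / 2) := by
  rcases eq_or_ne p 0 with rfl | hp_ne
  · simp
  have hlog : log (2 * p) = log 2 + log p := log_mul two_ne_zero hp_ne
  have hlog_nonpos : log (2 * p) ≤ 0 := log_nonpos (by linarith) (by linarith)
  rw [log_div hp_ne two_ne_zero]
  -- the difference of the two sides is `-(p / 2) * log (2 * p)`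
  nlinarith

lemma mul_log_le_mul_log_of_le_half {p q : ℝ} (hq : 0 ≤ q) (hqp : q ≤ p / 2) (hp : p ≤ 1 / 2) :
    p * log p ≤ q * log q := by
  have quarter_le : (1 : ℝ) / 4 ≤ exp (-1) := by
    rw [exp_neg, one_div]
    exact inv_anti₀ (exp_pos 1) (exp_one_lt_d9.trans (by norm_num)).le
  calc p * log p ≤ p / 2 * log (p / 2) := mul_log_le_mul_log_half (by linarith) hp
    _ ≤ q * log q :=
      mul_log_strictAntiOn.antitoneOn ⟨hq, by linarith⟩ ⟨by linarith, by linarith⟩ hqp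

end Real

theorem stmt_1_general (p pt ε w : ℝ)
    (hp : 0 < p) (hp2 : p ≤ 1/2)
    (hpt : 0 < pt) (hpt2 : pt ≤ p/2)
    (hdev : ε < |p * Real.log p - pt * Real.log pt|)
    (hw : w ≤ -1) (hwe : w * Real.exp w = -ε) :
    Real.exp w ≤ p := by
  have hmono : p * log p ≤ pt * log pt := mul_log_le_mul_log_of_le_half hpt.le hpt2 hp2
  have hpt_nonpos : pt * log pt ≤ 0 := mul_log_nonpos hpt.le (by linarith)
  rw [abs_sub_comm, abs_of_nonneg (sub_nonneg.mpr hmono)] at hdev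
  have hfw : exp w * log (exp w) = -ε := by rw [log_exp, mul_comm, hwe]
  have hexp_le : exp w ≤ exp (-1) := exp_le_exp.mpr hw
  refine le_of_not_gt fun hlt => ?_
  have := mul_log_strictAntiOn ⟨hp.le, hlt.le.trans hexp_le⟩ ⟨(exp_pos w).le, hexp_le⟩ hlt
  simp only [hfw] at this
  linarith

/-- If `0 < p ≤ 1/2`, `0 < p̃ ≤ p/2` and `|f(p) - f(p̃)| > ε` for `f(x) = x log x`
and `ε ∈ (0, 1/e)`, then `p ≥ exp (W₋₁(-ε))`, where `W₋₁` is the non-principal real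
branch of the Lambert W function (characterized by `w ≤ -1` and `w * exp w = -ε`). -/
theorem stmt_1 (p pt ε w : ℝ)
    (hp : 0 < p) (hp2 : p ≤ 1/2)
    (hpt : 0 < pt) (hpt2 : pt ≤ p/2)
    (hε : 0 < ε) (hε2 : ε < Real.exp (-1))
    (hdev : ε < |p * Real.log p - pt * Real.log pt|)
    (hw : w ≤ -1) (hwe : w * Real.exp w = -ε) :
    Real.exp w ≤ p :=
  stmt_1_general p pt ε w hp hp2 hpt hpt2 hdev hw hwe
end

section
/- For x ∈ (-1/e, 0), -W₋₁(x) < -2·ln(-x). -/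
open Real Set

lemma two_log_lt (t : ℝ) (ht : 1 ≤ t) : 2 * Real.log t < t := by
  rcases eq_or_lt_of_le ht with h | h
  · simp [← h]
  · have hs : 1 < Real.sqrt t := by
      rw [show (1:ℝ) = Real.sqrt 1 by simp]
      exact Real.sqrt_lt_sqrt (by norm_num) h
    have hlog : Real.log (Real.sqrt t) < Real.sqrt t - 1 :=
      Real.log_lt_sub_one_of_pos (by linarith) (by linarith)
    have h2 : Real.log t = 2 * Real.log (Real.sqrt t) := by
      rw [Real.log_sqrt (by linarith)]; ring
    have hsq : Real.sqrt t ^ 2 = t := Real.sq_sqrt (by linarith)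
    nlinarith [sq_nonneg (Real.sqrt t - 2)]

/-- For `x ∈ (-1/e, 0)` the non-principal Lambert W branch (characterized by
`w ≤ -1` and `w * exp w = x`) satisfies `-w < -2 ln(-x)`. -/
theorem stmt_6 (x w : ℝ) (hx : x ∈ Set.Ioo (-Real.exp (-1)) (0:ℝ))
    (hw : w ≤ -1) (hwe : w * Real.exp w = x) :
    -w < -2 * Real.log (-x) := by
  have hwpos : 0 < -w := by linarith
  have hlx : Real.log (-x) = Real.log (-w) + w := by
    rw [show -x = -w * Real.exp w by rw [← hwe]; ring,
      Real.log_mul (ne_of_gt hwpos) (Real.exp_ne_zero w), Real.log_exp]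
  have := two_log_lt (-w) (by linarith)
  linarith
end

section
/- Let k, l ≥ 1 and let p, q be probability distributions on {0,...,k-1} × {0,...,l-1} arising as p = p₀ + t·σ and q = q₀ + s·σ, where p₀, q₀ are product distributions, σ is the sign pattern σ_{ij} = (-1)^{i+j} restricted suitably so the perturbation preserves marginals, and t, s ≥ 0 are in the feasible ranges. Then the sup-norm distance satisfies ‖q - p‖_∞ ≥ |t - s|/(k + l + 1). -/
open Real Set Finset

/-- For `k × l` joint distributions `p` and `q` on `Fin k × Fin l` obtained by
perturbing product distributions along marginal-preserving paths (so that `p`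
has the product marginals `pA`, `pB` and `p 0 0 = pA 0 * pB 0 + t`, and
similarly for `q` with parameter `s`), the sup-norm distance satisfies
`‖q - p‖_∞ ≥ |t - s| / (k + l + 1)`. -/
theorem stmt_7 (k l : ℕ) [NeZero k] [NeZero l]
    (p q : Fin k → Fin l → ℝ) (pA qA : Fin k → ℝ) (pB qB : Fin l → ℝ) (t s : ℝ)
    (hpA0 : ∀ i, 0 ≤ pA i) (hpB0 : ∀ j, 0 ≤ pB j)
    (hqA0 : ∀ i, 0 ≤ qA i) (hqB0 : ∀ j, 0 ≤ qB j)
    (hpA1 : ∑ i, pA i = 1) (hpB1 : ∑ j, pB j = 1)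
    (hqA1 : ∑ i, qA i = 1) (hqB1 : ∑ j, qB j = 1)
    (hpmargA : ∀ i, ∑ j, p i j = pA i) (hpmargB : ∀ j, ∑ i, p i j = pB j)
    (hqmargA : ∀ i, ∑ j, q i j = qA i) (hqmargB : ∀ j, ∑ i, q i j = qB j)
    (ht : 0 ≤ t) (hs : 0 ≤ s)
    (hpt : p 0 0 = pA 0 * pB 0 + t) (hqs : q 0 0 = qA 0 * qB 0 + s) :
    |t - s| / ((k : ℝ) + l + 1) ≤ ‖(fun i => fun j => q i j - p i j : Fin k → Fin l → ℝ)‖ := by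
  set ε := ‖(fun i => fun j => q i j - p i j : Fin k → Fin l → ℝ)‖ with hε
  have hε0 : 0 ≤ ε := norm_nonneg _
  have hbound : ∀ i j, |q i j - p i j| ≤ ε := by
    intro i j
    exact le_trans (norm_le_pi_norm ((fun i => fun j => q i j - p i j : Fin k → Fin l → ℝ) i) j)
      (norm_le_pi_norm (fun i => fun j => q i j - p i j : Fin k → Fin l → ℝ) i)
  have hA : |qA 0 - pA 0| ≤ (l : ℝ) * ε := by
    have : qA 0 - pA 0 = ∑ j, (q 0 j - p 0 j) := by
      rw [Finset.sum_sub_distrib, hqmargA, hpmargA]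
    rw [this]
    calc |∑ j, (q 0 j - p 0 j)| ≤ ∑ j, |q 0 j - p 0 j| := Finset.abs_sum_le_sum_abs _ _
      _ ≤ ∑ _j : Fin l, ε := Finset.sum_le_sum (fun j _ => hbound 0 j)
      _ = (l : ℝ) * ε := by simp [mul_comm]
  have hB : |qB 0 - pB 0| ≤ (k : ℝ) * ε := by
    have : qB 0 - pB 0 = ∑ i, (q i 0 - p i 0) := by
      rw [Finset.sum_sub_distrib, hqmargB, hpmargB]
    rw [this]
    calc |∑ i, (q i 0 - p i 0)| ≤ ∑ i, |q i 0 - p i 0| := Finset.abs_sum_le_sum_abs _ _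
      _ ≤ ∑ _i : Fin k, ε := Finset.sum_le_sum (fun i _ => hbound i 0)
      _ = (k : ℝ) * ε := by simp [mul_comm]
  have hqA1' : qA 0 ≤ 1 := by
    rw [← hqA1]; exact Finset.single_le_sum (fun i _ => hqA0 i) (Finset.mem_univ 0)
  have hpB1' : pB 0 ≤ 1 := by
    rw [← hpB1]; exact Finset.single_le_sum (fun j _ => hpB0 j) (Finset.mem_univ 0)
  have hprod : |qA 0 * qB 0 - pA 0 * pB 0| ≤ (k : ℝ) * ε + (l : ℝ) * ε := by
    have heq : qA 0 * qB 0 - pA 0 * pB 0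
        = qA 0 * (qB 0 - pB 0) + pB 0 * (qA 0 - pA 0) := by ring
    rw [heq]
    calc |qA 0 * (qB 0 - pB 0) + pB 0 * (qA 0 - pA 0)|
        ≤ |qA 0 * (qB 0 - pB 0)| + |pB 0 * (qA 0 - pA 0)| := abs_add_le _ _
      _ = |qA 0| * |qB 0 - pB 0| + |pB 0| * |qA 0 - pA 0| := by rw [abs_mul, abs_mul]
      _ ≤ 1 * ((k : ℝ) * ε) + 1 * ((l : ℝ) * ε) := by
          gcongr
          · rw [abs_of_nonneg (hqA0 0)]; exact hqA1'
          · rw [abs_of_nonneg (hpB0 0)]; exact hpB1'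
      _ = (k : ℝ) * ε + (l : ℝ) * ε := by ring
  have hts : |t - s| ≤ ((k : ℝ) + l + 1) * ε := by
    have heq : t - s = (p 0 0 - q 0 0) + (qA 0 * qB 0 - pA 0 * pB 0) := by
      rw [hpt, hqs]; ring
    rw [heq]
    calc |(p 0 0 - q 0 0) + (qA 0 * qB 0 - pA 0 * pB 0)|
        ≤ |p 0 0 - q 0 0| + |qA 0 * qB 0 - pA 0 * pB 0| := abs_add_le _ _
      _ ≤ ε + ((k : ℝ) * ε + (l : ℝ) * ε) := by
          gcongr
          rw [abs_sub_comm]; exact hbound 0 0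
      _ = ((k : ℝ) + l + 1) * ε := by ring
  have hden : (0 : ℝ) < (k : ℝ) + l + 1 := by positivity
  rw [div_le_iff₀ hden]
  linarith [hts]
end

section
/- Let p(t) be the one-parameter family of 2×2 joint distributions with both marginals uniform: p(t) = [[1/4+t, 1/4-t],[1/4-t, 1/4+t]] for t ∈ [0, 1/4). Let τ(p(t)) denote the mutual information (KL divergence of p(t) from the uniform product distribution). If τ(p(t)) = η for t > 0, then (1/(2√2))·√(η/(2η+1)) ≤ t ≤ (1/(2√2))·√η. -/
/-!
With `x = 4t` the mutual information is `τ(p(t)) = F(x)/2`, where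
`F(x) = (1+x) log(1+x) + (1-x) log(1-x) = x (log(1+x) - log(1-x)) + log(1-x²)`.
The power series of the two logarithms combine to
`F(x) = ∑_{k ≥ 0} x^(2k+2) / ((2k+1)(k+1))`, whose coefficients lie in `(0, 1]` and start with `1`.
Hence `x² ≤ F(x) ≤ x²/(1-x²)`, i.e. `8t² ≤ η` and `η (1 - 16t²) ≤ 8t²`; taking square roots
gives the two bounds.
-/

open Real Set

theorem hasSum_mul_log_one_add_add_mul_log_one_sub {x : ℝ} (hx : |x| < 1) :
    HasSum (fun k : ℕ => (x ^ 2) ^ (k + 1) / ((2 * k + 1) * (k + 1)))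
      ((1 + x) * log (1 + x) + (1 - x) * log (1 - x)) := by
  have hx2 : |x ^ 2| < 1 := by rw [abs_pow, sq_lt_one_iff₀ (abs_nonneg x)]; exact hx
  have hsum := ((hasSum_log_sub_log_of_abs_lt_one hx).mul_left x).sub
    (hasSum_pow_div_log_of_abs_lt_one hx2)
  obtain ⟨hx_neg, hx_one⟩ := abs_lt.1 hx
  have hlog : log (1 - x ^ 2) = log (1 + x) + log (1 - x) := by
    rw [← log_mul (by linarith) (by linarith)]
    ring_nf
  rw [show (1 + x) * log (1 + x) + (1 - x) * log (1 - x)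
      = x * (log (1 + x) - log (1 - x)) - -log (1 - x ^ 2) by rw [hlog]; ring]
  refine hsum.congr_fun fun k => ?_
  field_simp
  ring

theorem sq_le_mul_log_one_add_add_mul_log_one_sub {x : ℝ} (hx : |x| < 1) :
    x ^ 2 ≤ (1 + x) * log (1 + x) + (1 - x) * log (1 - x) := by
  simpa using le_hasSum (hasSum_mul_log_one_add_add_mul_log_one_sub hx) 0
    fun k _ => by positivity

theorem mul_log_one_add_add_mul_log_one_sub_le {x : ℝ} (hx : |x| < 1) :
    (1 + x) * log (1 + x) + (1 - x) * log (1 - x) ≤ x ^ 2 / (1 - x ^ 2) := by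
  have hx2 : x ^ 2 < 1 := by rwa [sq_lt_one_iff_abs_lt_one]
  have hgeom := (hasSum_geometric_of_lt_one (sq_nonneg x) hx2).mul_left (x ^ 2)
  rw [← div_eq_mul_inv] at hgeom
  refine hasSum_le (fun k => ?_) (hasSum_mul_log_one_add_add_mul_log_one_sub hx) hgeom
  rw [← pow_succ']
  exact div_le_self (by positivity) (by nlinarith [k.cast_nonneg (α := ℝ)])

theorem one_div_two_mul_sqrt_two_mul_sqrt (a : ℝ) : 1 / (2 * √2) * √a = √(a / 8) := by
  rw [sqrt_div' _ (by norm_num : (0:ℝ) ≤ 8), show (8:ℝ) = 2 ^ 2 * 2 by norm_num,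
    sqrt_mul (by norm_num), sqrt_sq (by norm_num)]
  ring

/-- For the symmetric 2×2 path `p(t) = [[1/4+t, 1/4-t],[1/4-t, 1/4+t]]` with
uniform marginals, if the mutual information `τ(p(t)) = η` with `t ∈ (0, 1/4)`,
then `(1/(2√2))·√(η/(2η+1)) ≤ t ≤ (1/(2√2))·√η`. -/
theorem stmt_8 (t η : ℝ) (ht : 0 < t) (ht4 : t < 1/4)
    (hτ : 2 * ((1/4 + t) * Real.log ((1/4 + t) / (1/4)))
        + 2 * ((1/4 - t) * Real.log ((1/4 - t) / (1/4))) = η) :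
    1 / (2 * Real.sqrt 2) * Real.sqrt (η / (2 * η + 1)) ≤ t ∧
    t ≤ 1 / (2 * Real.sqrt 2) * Real.sqrt η := by
  have hx : |4 * t| < 1 := by rw [abs_lt]; constructor <;> linarith
  have hη : η = ((1 + 4 * t) * log (1 + 4 * t) + (1 - 4 * t) * log (1 - 4 * t)) / 2 := by
    rw [← hτ]
    ring_nf
  have hlower := sq_le_mul_log_one_add_add_mul_log_one_sub hx
  have hupper := mul_log_one_add_add_mul_log_one_sub_le hx
  have hsq : 0 < 1 - (4 * t) ^ 2 := by nlinarith
  have hη_lower : 8 * t ^ 2 ≤ η := by rw [hη]; linarith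
  have hη_pos : 0 < η := (by positivity : (0:ℝ) < 8 * t ^ 2).trans_le hη_lower
  have hη_upper : η / (2 * η + 1) ≤ 8 * t ^ 2 := by
    rw [le_div_iff₀ hsq] at hupper
    rw [div_le_iff₀ (by linarith), hη]
    linarith
  rw [one_div_two_mul_sqrt_two_mul_sqrt, one_div_two_mul_sqrt_two_mul_sqrt]
  constructor
  · rw [sqrt_le_left ht.le]
    linarith
  · rw [le_sqrt ht.le (by linarith)]
    linarith
end

section
/- Let q(t) be any one-parameter family of 2×2 joint distributions of the form q(t)_{ij} = q0_{ij} + (-1)^{i+j}·t, where q0 is a product distribution (q(0) ∈ 𝒫₀) and t ≥ 0 is feasible. If the mutual information τ(q(t)) = γ, then t ≤ √(γ/2). -/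
/-!
A cell with entry `a` and product value `b` contributes `a log (a/b) ≥ (a - b) + (a - b)²/2`
whenever `0 ≤ a, b ≤ 1`: this is the tangent-line inequality at `b` for `x log x - x²/2`, which is
convex on `[0, 1]` because its second derivative `1/x - 1` is nonnegative there. Summed over the
four cells the linear terms cancel and the quadratic ones give `γ ≥ 4 · t²/2 = 2t²`.
-/

open Real Set

theorem ConvexOn.add_mul_sub_le_of_hasDerivAt {S : Set ℝ} {f : ℝ → ℝ} {f' x y : ℝ}
    (hf : ConvexOn ℝ S f) (hx : x ∈ S) (hy : y ∈ S) (hf' : HasDerivAt f f' x) :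
    f x + f' * (y - x) ≤ f y := by
  rcases lt_trichotomy x y with hxy | rfl | hyx
  · have := hf.le_slope_of_hasDerivAt hx hy hxy hf'
    rw [slope_def_field, le_div_iff₀ (sub_pos.2 hxy)] at this
    linarith
  · simp
  · have := hf.slope_le_of_hasDerivAt hy hx hyx hf'
    rw [slope_def_field, div_le_iff₀ (sub_pos.2 hyx)] at this
    linarith

theorem monotoneOn_log_sub_self : MonotoneOn (fun x => log x - x) (Ioc 0 1) := by
  intro a ⟨ha, _⟩ c ⟨hc, hc1⟩ hac
  have hlog : 1 - a / c ≤ log c - log a := by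
    simpa [log_div hc.ne' ha.ne'] using one_sub_inv_le_log_of_pos (div_pos hc ha)
  have hcancel : c - a ≤ 1 - a / c := by
    rw [one_sub_div hc.ne', le_div_iff₀ hc]
    nlinarith [mul_nonneg (sub_nonneg.2 hac) (sub_nonneg.2 hc1)]
  dsimp only
  linarith

theorem hasDerivAt_mul_log_sub_sq_div_two {x : ℝ} (hx : x ≠ 0) :
    HasDerivAt (fun x => x * log x - x ^ 2 / 2) (log x + 1 - x) x :=
  ((hasDerivAt_mul_log hx).sub ((hasDerivAt_pow 2 x).div_const 2)).congr_deriv (by ring)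

theorem convexOn_mul_log_sub_sq_div_two :
    ConvexOn ℝ (Icc 0 1) (fun x => x * log x - x ^ 2 / 2) := by
  refine MonotoneOn.convexOn_of_deriv (convex_Icc 0 1) (by fun_prop) ?_ ?_ <;> rw [interior_Icc]
  · exact fun x hx =>
      (hasDerivAt_mul_log_sub_sq_div_two hx.1.ne').differentiableAt.differentiableWithinAt
  · intro a ha c hc hac
    rw [(hasDerivAt_mul_log_sub_sq_div_two ha.1.ne').deriv,
      (hasDerivAt_mul_log_sub_sq_div_two hc.1.ne').deriv]
    linarith [monotoneOn_log_sub_self (Ioo_subset_Ioc_self ha) (Ioo_subset_Ioc_self hc) hac]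

theorem sub_add_sq_div_two_le_mul_log_div {a b : ℝ} (ha : 0 ≤ a) (ha1 : a ≤ 1) (hb : 0 < b)
    (hb1 : b ≤ 1) : a - b + (a - b) ^ 2 / 2 ≤ a * log (a / b) := by
  rcases ha.eq_or_lt with rfl | ha
  · simp only [zero_sub, even_two, Even.neg_pow, zero_div, log_zero, mul_zero]
    nlinarith
  have := convexOn_mul_log_sub_sq_div_two.add_mul_sub_le_of_hasDerivAt
    ⟨hb.le, hb1⟩ ⟨ha.le, ha1⟩ (hasDerivAt_mul_log_sub_sq_div_two hb.ne')
  rw [log_div ha.ne' hb.ne']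
  linarith

theorem stmt_9_general (x y t γ : ℝ)
    (hx : x ∈ Set.Ioo (0:ℝ) 1) (hy : y ∈ Set.Ioo (0:ℝ) 1)
    (h00 : 0 < x * y + t) (h01 : 0 < x * (1 - y) - t)
    (h10 : 0 < (1 - x) * y - t) (h11 : 0 < (1 - x) * (1 - y) + t)
    (hτ : (x * y + t) * Real.log ((x * y + t) / (x * y))
        + (x * (1 - y) - t) * Real.log ((x * (1 - y) - t) / (x * (1 - y)))
        + ((1 - x) * y - t) * Real.log (((1 - x) * y - t) / ((1 - x) * y))
        + ((1 - x) * (1 - y) + t) * Real.log (((1 - x) * (1 - y) + t) / ((1 - x) * (1 - y)))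
        = γ) :
    t ≤ Real.sqrt (γ / 2) := by
  obtain ⟨hx0, hx1⟩ := hx
  obtain ⟨hy0, hy1⟩ := hy
  have hp00 : 0 < x * y := mul_pos hx0 hy0
  have hp01 : 0 < x * (1 - y) := mul_pos hx0 (sub_pos.2 hy1)
  have hp10 : 0 < (1 - x) * y := mul_pos (sub_pos.2 hx1) hy0
  have hp11 : 0 < (1 - x) * (1 - y) := mul_pos (sub_pos.2 hx1) (sub_pos.2 hy1)
  have k00 := sub_add_sq_div_two_le_mul_log_div h00.le (by linarith) hp00 (by linarith)
  have k01 := sub_add_sq_div_two_le_mul_log_div h01.le (by linarith) hp01 (by linarith)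
  have k10 := sub_add_sq_div_two_le_mul_log_div h10.le (by linarith) hp10 (by linarith)
  have k11 := sub_add_sq_div_two_le_mul_log_div h11.le (by linarith) hp11 (by linarith)
  calc t ≤ |t| := le_abs_self t
    _ ≤ √(γ / 2) := Real.abs_le_sqrt (by linarith)

/-- For a 2×2 path `q(t)` based at a product distribution with marginals
`(x, 1-x)` and `(y, 1-y)`, i.e. `q(t)_{ij} = q₀_{ij} + (-1)^{i+j} t`, with
positive entries and `t ≥ 0`: if the mutual information `τ(q(t)) = γ`,
then `t ≤ √(γ/2)`. -/
theorem stmt_9 (x y t γ : ℝ)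
    (hx : x ∈ Set.Ioo (0:ℝ) 1) (hy : y ∈ Set.Ioo (0:ℝ) 1) (ht : 0 ≤ t)
    (h00 : 0 < x * y + t) (h01 : 0 < x * (1 - y) - t)
    (h10 : 0 < (1 - x) * y - t) (h11 : 0 < (1 - x) * (1 - y) + t)
    (hτ : (x * y + t) * Real.log ((x * y + t) / (x * y))
        + (x * (1 - y) - t) * Real.log ((x * (1 - y) - t) / (x * (1 - y)))
        + ((1 - x) * y - t) * Real.log (((1 - x) * y - t) / ((1 - x) * y))
        + ((1 - x) * (1 - y) + t) * Real.log (((1 - x) * (1 - y) + t) / ((1 - x) * (1 - y)))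
        = γ) :
    t ≤ Real.sqrt (γ / 2) :=
  stmt_9_general x y t γ hx hy h00 h01 h10 h11 hτ
end
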